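/- Let γ ∈ (1,2) and define q_γ(ξ) = f_γ(ξ) + f_γ(-ξ). Then q_γ is real-valued, continuous and nonnegative on [-π,π]; it vanishes only at ξ = 0; and it has a zero of order γ at the origin, in the sense that lim_{ξ→0} q_γ(ξ)/|ξ|^γ = -2 cos(γπ/2), which is a strictly positive real number for γ ∈ (1,2). -/

import Mathlib

/-!
The coefficients `gcoef γ k` are those of the binomial series of `(1 - z) ^ γ`. For `1 ≤ γ ≤ 2`
they are absolutely summable (all but `gcoef γ 1` are nonnegative, and the partial sums are the
coefficients of `(1 - z) ^ (γ - 1)`, bounded by `1`), so the identity extends from the open disc to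
the unit circle, giving `f_γ(ξ) = -(γ/2 e^{-iξ} + (2-γ)/2) (1 - e^{iξ}) ^ γ`. Writing
`1 - e^{iξ} = 2 sin(ξ/2) e^{-is}` with `s = (π - ξ)/2` turns this into
`q_γ(ξ) = (2 sin(|ξ|/2)) ^ γ (γ cos((2-γ)s) - (2-γ) cos(γs))` on `[-π, π]`. The angular factor is
positive for `0 ≤ s < π/2` because `(2-γ)s ≤ γs < π`, and at `s = π/2` it equals
`-2 cos(γπ/2)`; since `2 sin(|ξ|/2) / |ξ| → 1`, this gives the order-`γ` zero at the origin.
-/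

open scoped Real Topology
open Filter

/-- Alternating fractional binomial coefficients. -/
noncomputable def gcoef (γ : ℝ) (k : ℕ) : ℝ :=
  (-1 : ℝ) ^ k / (Nat.factorial k) * ∏ i ∈ Finset.range k, (γ - i)

/-- WSGD weights. -/
noncomputable def w (γ : ℝ) : ℕ → ℝ
  | 0 => γ / 2 * gcoef γ 0
  | (k + 1) => γ / 2 * gcoef γ (k + 1) + (2 - γ) / 2 * gcoef γ k

/-- The symbol `f_γ(ξ) = -∑_{k=-1}^∞ w_{k+1}^{(γ)} e^{ikξ}`. -/
noncomputable def fsym (γ : ℝ) (ξ : ℝ) : ℂ :=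
  -∑' k : ℕ, (w γ k : ℂ) * Complex.exp (Complex.I * ((k : ℂ) - 1) * (ξ : ℂ))

/-- `q_γ(ξ) = f_γ(ξ) + f_γ(-ξ)`. -/
noncomputable def qsym (γ : ℝ) (ξ : ℝ) : ℂ := fsym γ ξ + fsym γ (-ξ)

lemma gcoef_zero (γ : ℝ) : gcoef γ 0 = 1 := by simp [gcoef]

lemma gcoef_succ (γ : ℝ) (k : ℕ) : gcoef γ (k + 1) = gcoef γ k * ((k - γ) / (k + 1)) := by
  simp only [gcoef, Finset.prod_range_succ, Nat.factorial_succ, pow_succ]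
  push_cast
  field_simp
  ring

lemma gcoef_one (γ : ℝ) : gcoef γ 1 = -γ := by
  simp [gcoef_succ, gcoef_zero]

lemma gcoef_eq_neg_one_pow_mul_choose (γ : ℝ) (k : ℕ) :
    gcoef γ k = (-1) ^ k * Ring.choose γ k := by
  rw [gcoef, Ring.choose_eq_smul, ← Polynomial.aeval_eq_smeval, Polynomial.aeval_def,
    Polynomial.eval₂_eq_eval_map, descPochhammer_map, descPochhammer_eval_eq_prod_range,
    smul_eq_mul]
  ring

lemma gcoef_sub_one_succ (γ : ℝ) (k : ℕ) :
    gcoef (γ - 1) (k + 1) = gcoef (γ - 1) k + gcoef γ (k + 1) := by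
  simp only [gcoef_eq_neg_one_pow_mul_choose, pow_succ]
  have hpascal := Ring.choose_succ_succ (γ - 1) k
  rw [sub_add_cancel] at hpascal
  rw [hpascal]
  ring

lemma sum_range_gcoef (γ : ℝ) (n : ℕ) :
    ∑ k ∈ Finset.range (n + 1), gcoef γ k = gcoef (γ - 1) n := by
  induction n with
  | zero => simp [gcoef_zero]
  | succ n ih => rw [Finset.sum_range_succ, ih, gcoef_sub_one_succ]

lemma abs_gcoef_le_one {a : ℝ} (ha₀ : -1 ≤ a) (ha₁ : a ≤ 1) (k : ℕ) : |gcoef a k| ≤ 1 := by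
  induction k with
  | zero => simp [gcoef_zero]
  | succ k ih =>
    have hk : (0 : ℝ) ≤ k := k.cast_nonneg
    have hfactor : |((k : ℝ) - a) / (k + 1)| ≤ 1 := by
      rw [abs_div, abs_of_pos (by positivity : (0 : ℝ) < k + 1), div_le_one (by positivity),
        abs_le]
      constructor <;> linarith
    rw [gcoef_succ, abs_mul]
    exact mul_le_one₀ ih (abs_nonneg _) hfactor

lemma gcoef_nonneg {γ : ℝ} (hγ₁ : 1 ≤ γ) (hγ₂ : γ ≤ 2) {k : ℕ} (hk : 2 ≤ k) : 0 ≤ gcoef γ k := by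
  induction k, hk using Nat.le_induction with
  | base =>
    rw [gcoef_succ, gcoef_one]
    push_cast
    nlinarith
  | succ k hk ih =>
    have : (2 : ℝ) ≤ k := by exact_mod_cast hk
    rw [gcoef_succ]
    exact mul_nonneg ih (div_nonneg (by linarith) (by positivity))

lemma summable_abs_gcoef {γ : ℝ} (hγ₁ : 1 ≤ γ) (hγ₂ : γ ≤ 2) : Summable fun k ↦ |gcoef γ k| := by
  rw [← summable_nat_add_iff 2]
  have hnonneg (k : ℕ) : 0 ≤ gcoef γ (k + 2) := gcoef_nonneg hγ₁ hγ₂ (by omega)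
  simp only [abs_of_nonneg (hnonneg _)]
  refine summable_of_sum_range_le hnonneg (c := γ) fun n ↦ ?_
  -- the tail sums telescope to `gcoef (γ - 1) (n + 1) - gcoef γ 0 - gcoef γ 1`
  have htail := sum_range_gcoef γ (n + 1)
  rw [Finset.sum_range_succ', Finset.sum_range_succ', gcoef_zero, gcoef_one] at htail
  have := (abs_le.mp (abs_gcoef_le_one (a := γ - 1) (by linarith) (by linarith) (n + 1))).2
  linarith

section

open Complex

lemma hasSum_gcoef_mul_pow_of_norm_lt_one (γ : ℝ) {z : ℂ} (hz : ‖z‖ < 1) :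
    HasSum (fun n ↦ (gcoef γ n : ℂ) * z ^ n) ((1 - z) ^ (γ : ℂ)) := by
  have h := one_add_cpow_hasFPowerSeriesOnBall_zero (a := γ) |>.hasSum
    (y := -z) (by simpa [← ofReal_norm] using hz)
  simp only [binomialSeries_apply, List.ofFn_const, List.prod_replicate, smul_eq_mul, zero_sub,
    ← sub_eq_add_neg] at h
  refine h.congr_fun fun n ↦ ?_
  rw [gcoef_eq_neg_one_pow_mul_choose, neg_pow]
  push_cast
  ring

lemma norm_gcoef_mul_pow_le (γ : ℝ) {z : ℂ} (hz : ‖z‖ ≤ 1) (n : ℕ) :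
    ‖(gcoef γ n : ℂ) * z ^ n‖ ≤ |gcoef γ n| := by
  rw [norm_mul, norm_pow, norm_real, Real.norm_eq_abs]
  exact mul_le_of_le_one_right (abs_nonneg _) (pow_le_one₀ (norm_nonneg z) hz)

lemma continuousAt_one_sub_cpow {γ : ℝ} (hγ : 0 < γ) {z : ℂ} (hz : z.re ≤ 1) :
    ContinuousAt (fun x : ℂ ↦ (1 - x) ^ (γ : ℂ)) z :=
  (continuousAt_cpow_const_of_re_pos (by simp [hz]) (by simpa using hγ)).comp
    (continuousAt_const.sub continuousAt_id)

lemma hasSum_gcoef_mul_pow_of_norm_le_one {γ : ℝ} (hγ₁ : 1 ≤ γ) (hγ₂ : γ ≤ 2) {z : ℂ}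
    (hz : ‖z‖ ≤ 1) : HasSum (fun n ↦ (gcoef γ n : ℂ) * z ^ n) ((1 - z) ^ (γ : ℂ)) := by
  have hsummable := summable_abs_gcoef hγ₁ hγ₂
  -- both sides are continuous on the closed disc and agree on the open one
  have hEq : Set.EqOn (fun x : ℂ ↦ ∑' n, (gcoef γ n : ℂ) * x ^ n) (fun x ↦ (1 - x) ^ (γ : ℂ))
      (Metric.closedBall 0 1) := by
    refine Set.EqOn.of_subset_closure (s := Metric.ball 0 1)
      (fun x hx ↦ (hasSum_gcoef_mul_pow_of_norm_lt_one γ (by simpa using hx)).tsum_eq)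
      (continuousOn_tsum (fun n ↦ by fun_prop) hsummable
        fun n x hx ↦ norm_gcoef_mul_pow_le γ (by simpa using hx) n)
      (fun x hx ↦ (continuousAt_one_sub_cpow (by linarith) ?_).continuousWithinAt)
      Metric.ball_subset_closedBall (closure_ball 0 one_ne_zero).ge
    exact (re_le_norm x).trans (by simpa using hx)
  exact (Summable.of_norm_bounded hsummable (norm_gcoef_mul_pow_le γ hz)).hasSum_iff.mpr
    (hEq (by simpa using hz))

lemma hasSum_w_mul_pow {γ : ℝ} {z S : ℂ} (h : HasSum (fun n ↦ (gcoef γ n : ℂ) * z ^ n) S) :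
    HasSum (fun k ↦ (w γ k : ℂ) * z ^ k) (((γ : ℂ) / 2 + (2 - (γ : ℂ)) / 2 * z) * S) := by
  have htail : HasSum (fun n ↦ (gcoef γ (n + 1) : ℂ) * z ^ (n + 1)) (S - 1) := by
    have := (hasSum_nat_add_iff' 1).mpr h
    rwa [Finset.sum_range_one, gcoef_zero, pow_zero, ofReal_one, one_mul] at this
  have hsucc : HasSum (fun n ↦ (w γ (n + 1) : ℂ) * z ^ (n + 1))
      ((γ : ℂ) / 2 * (S - 1) + (2 - (γ : ℂ)) / 2 * z * S) := by
    refine ((htail.mul_left _).add (h.mul_left _)).congr_fun fun n ↦ ?_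
    simp only [w]
    push_cast
    ring
  have hfirst : (w γ 0 : ℂ) * z ^ 0 + ((γ : ℂ) / 2 * (S - 1) + (2 - (γ : ℂ)) / 2 * z * S) =
      ((γ : ℂ) / 2 + (2 - (γ : ℂ)) / 2 * z) * S := by
    simp only [w, gcoef_zero]
    push_cast
    ring
  exact hfirst ▸ HasSum.zero_add (f := fun k ↦ (w γ k : ℂ) * z ^ k) hsucc

lemma fsym_eq {γ : ℝ} (hγ₁ : 1 ≤ γ) (hγ₂ : γ ≤ 2) (ξ : ℝ) :
    fsym γ ξ =
      -(((γ : ℂ) / 2 * exp (-(ξ * I)) + (2 - (γ : ℂ)) / 2) * (1 - exp (ξ * I)) ^ (γ : ℂ)) := by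
  have hz : ‖exp (ξ * I)‖ ≤ 1 := (norm_exp_ofReal_mul_I ξ).le
  have h := (hasSum_w_mul_pow (hasSum_gcoef_mul_pow_of_norm_le_one hγ₁ hγ₂ hz)).mul_right
    (exp (-(ξ * I)))
  have hterm (k : ℕ) : (w γ k : ℂ) * exp (I * ((k : ℂ) - 1) * ξ) =
      (w γ k : ℂ) * exp (ξ * I) ^ k * exp (-(ξ * I)) := by
    rw [← exp_nat_mul, mul_assoc _ (exp _), ← exp_add]
    congr 2
    ring
  have hunit : exp (ξ * I) * exp (-(ξ * I)) = 1 := by rw [← exp_add, add_neg_cancel, exp_zero]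
  rw [fsym, (h.congr_fun hterm).tsum_eq]
  linear_combination (-(2 - (γ : ℂ)) / 2 * (1 - exp (ξ * I)) ^ (γ : ℂ)) * hunit

lemma continuous_fsym {γ : ℝ} (hγ₁ : 1 ≤ γ) (hγ₂ : γ ≤ 2) : Continuous (fsym γ) := by
  rw [funext (fsym_eq hγ₁ hγ₂), continuous_iff_continuousAt]
  intro ξ
  have hcpow : ContinuousAt (fun ξ : ℝ ↦ (1 - exp (ξ * I)) ^ (γ : ℂ)) ξ :=
    ContinuousAt.comp (g := fun x : ℂ ↦ (1 - x) ^ (γ : ℂ))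
      (continuousAt_one_sub_cpow (by linarith) ((re_le_norm _).trans (norm_exp_ofReal_mul_I ξ).le))
      (by fun_prop)
  fun_prop

lemma fsym_neg (γ ξ : ℝ) : fsym γ (-ξ) = starRingEnd ℂ (fsym γ ξ) := by
  simp only [fsym, map_neg, conj_tsum, map_mul, conj_ofReal, ← exp_conj,
    conj_I, map_sub, map_natCast, map_one, ofReal_neg]
  congr! 5
  ring

lemma qsym_eq_ofReal (γ ξ : ℝ) : qsym γ ξ = (2 * (fsym γ ξ).re : ℝ) := by
  rw [qsym, fsym_neg, add_conj]

lemma qsym_neg (γ ξ : ℝ) : qsym γ (-ξ) = qsym γ ξ := by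
  rw [qsym, qsym, neg_neg, add_comm]

lemma one_sub_exp_mul_I (ξ : ℝ) :
    1 - exp (ξ * I) = (2 * Real.sin (ξ / 2) : ℝ) * exp (((ξ - π) / 2 : ℝ) * I) := by
  have hcos : Real.cos ((ξ - π) / 2) = Real.sin (ξ / 2) := by
    rw [← Real.cos_sub_pi_div_two]; ring_nf
  have hsin : Real.sin ((ξ - π) / 2) = -Real.cos (ξ / 2) := by
    rw [← Real.sin_sub_pi_div_two]; ring_nf
  have hdouble : ξ = 2 * (ξ / 2) := by ring
  apply ext <;>
    simp only [sub_re, sub_im, one_re, one_im, re_ofReal_mul, im_ofReal_mul,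
      exp_ofReal_mul_I_re, exp_ofReal_mul_I_im, hcos, hsin]
  · rw [hdouble, Real.cos_two_mul, Real.cos_sq']; ring_nf
  · rw [hdouble, Real.sin_two_mul]; ring_nf

lemma ofReal_mul_exp_mul_I_cpow {R θ γ : ℝ} (hR : 0 ≤ R) (hγ : γ ≠ 0) (hθ₁ : -π < θ)
    (hθ₂ : θ ≤ π) : ((R : ℂ) * exp (θ * I)) ^ (γ : ℂ) = (R ^ γ : ℝ) * exp ((γ * θ : ℝ) * I) := by
  rcases hR.eq_or_lt with rfl | hR
  · simp [Real.zero_rpow hγ, zero_cpow (ofReal_ne_zero.mpr hγ)]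
  rw [cpow_def_of_ne_zero (mul_ne_zero (ofReal_ne_zero.mpr hR.ne') (exp_ne_zero _)),
    log_ofReal_mul hR (exp_ne_zero _), log_exp (by simpa using hθ₁) (by simpa using hθ₂),
    Real.rpow_def_of_pos hR, ofReal_exp, ← exp_add]
  push_cast
  ring_nf

noncomputable def angularFactor (γ s : ℝ) : ℝ :=
  γ * Real.cos ((2 - γ) * s) - (2 - γ) * Real.cos (γ * s)

lemma fsym_eq_of_nonneg_of_le_pi {γ ξ : ℝ} (hγ₁ : 1 ≤ γ) (hγ₂ : γ ≤ 2) (h₀ : 0 ≤ ξ) (hπ : ξ ≤ π) :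
    fsym γ ξ = ((2 * Real.sin (ξ / 2)) ^ γ : ℝ) *
      ((γ / 2 : ℝ) * exp (((2 - γ) * ((π - ξ) / 2) : ℝ) * I) -
        ((2 - γ) / 2 : ℝ) * exp ((-(γ * ((π - ξ) / 2)) : ℝ) * I)) := by
  have hsin : 0 ≤ 2 * Real.sin (ξ / 2) :=
    mul_nonneg zero_le_two (Real.sin_nonneg_of_nonneg_of_le_pi (by linarith) (by linarith))
  have hrot : exp (-(ξ * I)) * exp ((-(γ * ((π - ξ) / 2)) : ℝ) * I) =
      -exp (((2 - γ) * ((π - ξ) / 2) : ℝ) * I) := by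
    rw [← exp_add, show -(ξ * I) + (-(γ * ((π - ξ) / 2)) : ℝ) * I =
        ((2 - γ) * ((π - ξ) / 2) : ℝ) * I + -(π * I) by push_cast; ring,
      exp_add, exp_neg_pi_mul_I, mul_neg_one]
  rw [fsym_eq hγ₁ hγ₂, one_sub_exp_mul_I,
    ofReal_mul_exp_mul_I_cpow hsin (by linarith) (by linarith [Real.pi_pos]) (by linarith),
    show γ * ((ξ - π) / 2) = -(γ * ((π - ξ) / 2)) by ring]
  push_cast at hrot ⊢
  linear_combination (-(γ : ℂ) / 2 * ((2 * Real.sin (ξ / 2)) ^ γ : ℝ)) * hrot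

lemma qsym_re_eq {γ ξ : ℝ} (hγ₁ : 1 ≤ γ) (hγ₂ : γ ≤ 2) (hξ : |ξ| ≤ π) :
    (qsym γ ξ).re = (2 * Real.sin (|ξ| / 2)) ^ γ * angularFactor γ ((π - |ξ|) / 2) := by
  have habs : qsym γ ξ = qsym γ |ξ| := by
    rcases abs_choice ξ with h | h <;> rw [h]
    rw [qsym_neg]
  rw [habs, qsym_eq_ofReal, ofReal_re, fsym_eq_of_nonneg_of_le_pi hγ₁ hγ₂ (abs_nonneg ξ) hξ]
  simp only [re_ofReal_mul, sub_re, exp_ofReal_mul_I_re, Real.cos_neg,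
    angularFactor]
  ring

end

lemma angularFactor_pos {γ s : ℝ} (hγ₁ : 1 < γ) (hγ₂ : γ ≤ 2) (hs₀ : 0 ≤ s) (hs : s < π / 2) :
    0 < angularFactor γ s := by
  have hpos : 0 < Real.cos ((2 - γ) * s) :=
    Real.cos_pos_of_mem_Ioo ⟨by nlinarith [Real.pi_pos], by nlinarith⟩
  have hle : Real.cos (γ * s) ≤ Real.cos ((2 - γ) * s) :=
    Real.cos_le_cos_of_nonneg_of_le_pi (by nlinarith) (by nlinarith) (by nlinarith)
  unfold angularFactor
  nlinarith

lemma angularFactor_pi_div_two (γ : ℝ) : angularFactor γ (π / 2) = -2 * Real.cos (γ * π / 2) := by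
  rw [angularFactor, show (2 - γ) * (π / 2) = π - γ * π / 2 by ring, Real.cos_pi_sub,
    show γ * (π / 2) = γ * π / 2 by ring]
  ring

lemma neg_two_mul_cos_pos {γ : ℝ} (hγ₁ : 1 < γ) (hγ₂ : γ < 2) : 0 < -2 * Real.cos (γ * π / 2) := by
  have := Real.cos_neg_of_pi_div_two_lt_of_lt (x := γ * π / 2) (by nlinarith [Real.pi_pos])
    (by nlinarith [Real.pi_pos])
  linarith

lemma sin_abs_div_two_pos {ξ : ℝ} (hξ₀ : ξ ≠ 0) (hξ : |ξ| ≤ π) : 0 < Real.sin (|ξ| / 2) :=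
  Real.sin_pos_of_pos_of_lt_pi (by positivity) (by linarith [Real.pi_pos])

lemma qsym_re_pos {γ ξ : ℝ} (hγ₁ : 1 < γ) (hγ₂ : γ ≤ 2) (hξ₀ : ξ ≠ 0) (hξ : |ξ| ≤ π) :
    0 < (qsym γ ξ).re := by
  rw [qsym_re_eq hγ₁.le hγ₂ hξ]
  refine mul_pos (Real.rpow_pos_of_pos ?_ γ) (angularFactor_pos hγ₁ hγ₂ (by linarith) ?_)
  · linarith [sin_abs_div_two_pos hξ₀ hξ]
  · linarith [abs_pos.mpr hξ₀]

lemma qsym_re_zero {γ : ℝ} (hγ₁ : 1 ≤ γ) (hγ₂ : γ ≤ 2) : (qsym γ 0).re = 0 := by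
  rw [qsym_re_eq hγ₁ hγ₂ (by simp [Real.pi_pos.le])]
  simp [Real.zero_rpow (by linarith : γ ≠ 0)]

lemma tendsto_qsym_re_div_abs_rpow {γ : ℝ} (hγ₁ : 1 ≤ γ) (hγ₂ : γ ≤ 2) :
    Tendsto (fun ξ : ℝ ↦ (qsym γ ξ).re / |ξ| ^ γ) (𝓝[≠] 0)
      (𝓝 (angularFactor γ (π / 2))) := by
  set H : ℝ → ℝ := fun ξ ↦ Real.sinc (|ξ| / 2) ^ γ * angularFactor γ ((π - |ξ|) / 2)
  have hH : Continuous H := by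
    unfold H angularFactor
    exact ((Real.continuous_sinc.comp (by fun_prop)).rpow_const fun _ ↦ Or.inr (by linarith)).mul
      (by fun_prop)
  have hH0 : H 0 = angularFactor γ (π / 2) := by simp [H]
  refine hH0 ▸ (hH.tendsto 0).mono_left nhdsWithin_le_nhds |>.congr' ?_
  have hIcc : Set.Icc (-π) π ∈ 𝓝 0 := Icc_mem_nhds (neg_lt_zero.mpr Real.pi_pos) Real.pi_pos
  filter_upwards [self_mem_nhdsWithin, nhdsWithin_le_nhds hIcc] with ξ (hξ₀ : ξ ≠ 0) hξ
  have hξ' : |ξ| ≤ π := abs_le.mpr hξ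
  have hsin : 0 ≤ 2 * Real.sin (|ξ| / 2) := by linarith [sin_abs_div_two_pos hξ₀ hξ']
  rw [qsym_re_eq hγ₁ hγ₂ hξ', mul_div_right_comm, ← Real.div_rpow hsin (abs_nonneg ξ)]
  simp only [H, Real.sinc_of_ne_zero (by positivity : |ξ| / 2 ≠ 0)]
  congr 2
  field_simp

/-- `q_γ` is real-valued, continuous and nonnegative on `[-π,π]`, vanishes only at `ξ = 0`
there, and has a zero of order `γ` at the origin:
`q_γ(ξ)/|ξ|^γ → -2cos(γπ/2) > 0` as `ξ → 0`. -/
theorem qsym_properties (γ : ℝ) (hγ1 : 1 < γ) (hγ2 : γ < 2) :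
    (∀ ξ : ℝ, (qsym γ ξ).im = 0) ∧
    Continuous (fun ξ : ℝ => (qsym γ ξ).re) ∧
    (∀ ξ ∈ Set.Icc (-Real.pi) Real.pi, 0 ≤ (qsym γ ξ).re) ∧
    (∀ ξ ∈ Set.Icc (-Real.pi) Real.pi, ((qsym γ ξ).re = 0 ↔ ξ = 0)) ∧
    Tendsto (fun ξ : ℝ => (qsym γ ξ).re / |ξ| ^ γ) (𝓝[≠] (0 : ℝ))
      (𝓝 (-2 * Real.cos (γ * Real.pi / 2))) ∧
    0 < -2 * Real.cos (γ * Real.pi / 2) := by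
  have hpos (ξ : ℝ) (hξ : ξ ∈ Set.Icc (-π) π) (hξ₀ : ξ ≠ 0) : 0 < (qsym γ ξ).re :=
    qsym_re_pos hγ1 hγ2.le hξ₀ (abs_le.mpr hξ)
  have hzero : (qsym γ 0).re = 0 := qsym_re_zero hγ1.le hγ2.le
  have hf := continuous_fsym hγ1.le hγ2.le
  refine ⟨fun ξ ↦ by rw [qsym_eq_ofReal, Complex.ofReal_im],
    Complex.continuous_re.comp (hf.add (hf.comp continuous_neg)),
    fun ξ hξ ↦ ?_, fun ξ hξ ↦ ⟨fun h ↦ ?_, fun h ↦ h ▸ hzero⟩,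
    angularFactor_pi_div_two γ ▸ tendsto_qsym_re_div_abs_rpow hγ1.le hγ2.le,
    neg_two_mul_cos_pos hγ1 hγ2⟩
  · rcases eq_or_ne ξ 0 with rfl | hξ₀
    exacts [hzero.ge, (hpos ξ hξ hξ₀).le]
  · by_contra hξ₀
    exact (hpos ξ hξ hξ₀).ne' h
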